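/- arXiv:2206.03458 — 2 statements merged into one kernel-verified Lean document; each statement's English description precedes it below -/
import Mathlib

section
/- Fix α, β in S, a ∈ S\{0,1}, k ≥ 2, positive integers b_1, ..., b_k, and s, s' ∈ {0,1}. Then the sum over j from 1 to k-1 of D_{α,β}(U(b_1+⋯+b_j - s), ι^{b_1+⋯+b_j-j}(a), U(b_{j+1}+⋯+b_k - s')) equals -(-1)^s Σ_{t=0}^{1} (Δ^{α,β}_{a,t} - Δ^{α,β}_{a,ι^{k+1}(t)}) W(t; b_1+⋯+b_k-s-s') + (Δ^{α,β}_{a,0}+Δ^{α,β}_{a,1}) δ_{b_1,1} δ_{s,1} U(b_1+⋯+b_k-s-s') - (Δ^{α,β}_{a,0}+Δ^{α,β}_{a,1}) δ_{b_k,1} δ_{s',1} U(b_1+⋯+b_k-s-s'). -/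
noncomputable section
namespace BlockShuffle

/-- The algebra `𝒜 = ℚ⟨e_z : z ∈ ℂ⟩`, realized as the monoid algebra of the free
monoid of words in complex letters. -/
abbrev AA : Type := MonoidAlgebra ℚ (FreeMonoid ℂ)

/-- The basis word `e_{a₁} ⋯ e_{a_n}` of `𝒜`. -/
def wA (w : List ℂ) : AA := MonoidAlgebra.single (FreeMonoid.ofList w) 1

/-- The involution `ι(z) = 1 - z` on `ℂ`. -/
def iC : ℂ → ℂ := fun z => 1 - z

/-- The alternating word `W(t; b) = e_{ι⁰(t)} e_{ι¹(t)} ⋯ e_{ι^{b-1}(t)}`. -/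
def Wword (t : ℂ) (b : ℕ) : List ℂ := List.ofFn fun i : Fin b => iC^[(i : ℕ)] t

/-- `U(b) = W(0;b) + W(1;b)`, the sum of the two alternating words of length `b`. -/
def Uel (b : ℕ) : AA := wA (Wword 0 b) + wA (Wword 1 b)

/-- `U⁻(b) = W(0;b) - W(1;b)`. -/
def UelM (b : ℕ) : AA := wA (Wword 0 b) - wA (Wword 1 b)

/-- The `s`-fold iterate `ι^s` of the involution of `𝒜` induced by `ι(e_z) = e_{1-z}`. -/
def iAs (s : ℕ) : AA →ₗ[ℚ] AA := MonoidAlgebra.mapDomainLinearMap ℚ ℚ (FreeMonoid.map (iC^[s]))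

open Classical in
/-- `Δ^{α,β}_{x,y} = 1` if `{α,β} ∈ {{x,y}, {1-x,1-y}}`, else `0`. -/
def Delta (α β x y : ℂ) : ℚ :=
  if ({α, β} : Set ℂ) = {x, y} ∨ ({α, β} : Set ℂ) = {1 - x, 1 - y} then 1 else 0

/-- `Δ^{α,β}_{a,s}` for the optional first/last letter `s` of a word (`0` if absent). -/
def hdDelta (α β a : ℂ) : Option ℂ → ℚ
  | some s => Delta α β a s
  | none => 0

/-- The map `D_{α,β}(w₁, a, w₂)` on basis words: `Σ_s Δ^{α,β}_{a,s}(w₁ e_s w_{2,s} -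
w_{1,s} e_s w₂)` where `w₂ = q₂ + Σ_s e_s w_{2,s}`, `w₁ = q₁ + Σ_s w_{1,s} e_s`. -/
def DDw (α β : ℂ) (w₁ : List ℂ) (a : ℂ) (w₂ : List ℂ) : AA :=
  (hdDelta α β a w₂.head? - hdDelta α β a w₁.getLast?) • wA (w₁ ++ w₂)

/-- The bilinear extension of `D_{α,β}(·, a, ·)`. -/
def DDL (α β a : ℂ) : AA →ₗ[ℚ] AA →ₗ[ℚ] AA :=
  (Finsupp.lsum ℚ fun w₁ => LinearMap.toSpanSingleton ℚ (AA →ₗ[ℚ] AA)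
    ((Finsupp.lsum ℚ fun w₂ =>
      LinearMap.toSpanSingleton ℚ AA (DDw α β (FreeMonoid.toList w₁) a (FreeMonoid.toList w₂)))
        ∘ₗ (MonoidAlgebra.coeffLinearEquiv ℚ).toLinearMap))
    ∘ₗ (MonoidAlgebra.coeffLinearEquiv ℚ).toLinearMap


-- basic iC lemmas
lemma iC_iC (z : ℂ) : iC (iC z) = z := by simp [iC]

lemma iter_iC (n : ℕ) (z : ℂ) : iC^[n] z = if n % 2 = 0 then z else iC z := by
  induction n with
  | zero => simp
  | succ n ih =>
    rw [Function.iterate_succ_apply', ih]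
    rcases Nat.even_or_odd n with h | h
    · simp [Nat.even_iff.mp h, Nat.succ_mod_two_eq_one_iff.mpr (Nat.even_iff.mp h)]
    · simp [Nat.odd_iff.mp h, Nat.succ_mod_two_eq_zero_iff.mpr (Nat.odd_iff.mp h), iC_iC]

lemma iter_iC_congr {m n : ℕ} (h : m % 2 = n % 2) (z : ℂ) : iC^[m] z = iC^[n] z := by
  rw [iter_iC, iter_iC, h]

-- Delta symmetry
lemma Delta_iC (α β x y : ℂ) : Delta α β (iC x) y = Delta α β x (iC y) := by
  classical
  simp only [Delta, iC, sub_sub_cancel, or_comm]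

lemma Delta_iter (α β : ℂ) (c : ℕ) (x y : ℂ) :
    Delta α β (iC^[c] x) y = Delta α β x (iC^[c] y) := by
  induction c generalizing y with
  | zero => rfl
  | succ c ih =>
    rw [Function.iterate_succ_apply', Delta_iC, ih]
    simp [← Function.iterate_succ_apply, Function.iterate_succ_apply']

-- DDL on singles
lemma DDL_single (α β a : ℂ) (w₁ w₂ : List ℂ) :
    DDL α β a (wA w₁) (wA w₂) = DDw α β w₁ a w₂ := by
  rw [DDL, wA, wA]
  simp only [LinearMap.comp_apply, LinearEquiv.coe_coe]
  erw [Finsupp.lsum_single, LinearMap.toSpanSingleton_apply_one]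
  simp only [LinearMap.comp_apply, LinearEquiv.coe_coe]
  erw [Finsupp.lsum_single,
    LinearMap.toSpanSingleton_apply_one]
  rfl

-- Wword basics
lemma Wword_zero (t : ℂ) : Wword t 0 = [] := by simp [Wword]

lemma Wword_succ (t : ℂ) (b : ℕ) : Wword t (b + 1) = Wword t b ++ [iC^[b] t] := by
  simp only [Wword]
  rw [List.ofFn_succ']
  simp [List.concat_eq_append]

lemma Wword_head? (t : ℂ) (b : ℕ) (hb : 1 ≤ b) : (Wword t b).head? = some t := by
  obtain ⟨b, rfl⟩ := Nat.exists_eq_add_of_le hb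
  rw [add_comm]
  simp [Wword, List.ofFn_succ]

lemma Wword_getLast? (t : ℂ) (b : ℕ) (hb : 1 ≤ b) :
    (Wword t b).getLast? = some (iC^[b-1] t) := by
  obtain ⟨b, rfl⟩ := Nat.exists_eq_add_of_le hb
  rw [add_comm, Wword_succ]
  simp

lemma Wword_append (t : ℂ) (m n : ℕ) :
    Wword t m ++ Wword (iC^[m] t) n = Wword t (m + n) := by
  induction n with
  | zero => simp [Wword_zero]
  | succ n ih => rw [Wword_succ, ← add_assoc, Wword_succ, ← List.append_assoc, ih,
      ← Function.iterate_add_apply, add_comm m n]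

lemma iC_zero : iC 0 = 1 := by simp [iC]
lemma iC_one : iC 1 = 0 := by simp [iC]

lemma DDw_Wword (α β a' t t' : ℂ) {m n : ℕ} (hm : 1 ≤ m) (hn : 1 ≤ n) :
    DDw α β (Wword t m) a' (Wword t' n)
      = (Delta α β a' t' - Delta α β a' (iC^[m-1] t)) • wA (Wword t m ++ Wword t' n) := by
  rw [DDw, Wword_head? _ _ hn, Wword_getLast? _ _ hm]; rfl

lemma DDL_Uel_Uel (α β a' : ℂ) {m n : ℕ} (hm : 1 ≤ m) (hn : 1 ≤ n) :
    DDL α β a' (Uel m) (Uel n) =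
      (Delta α β a' (iC^[m] 0) - Delta α β a' (iC^[m+1] 0)) • wA (Wword 0 (m+n)) +
      (Delta α β a' (iC^[m] 1) - Delta α β a' (iC^[m+1] 1)) • wA (Wword 1 (m+n)) := by
  have h00 := Wword_append 0 m n
  have h11 := Wword_append 1 m n
  simp only [Uel, map_add, LinearMap.add_apply, DDL_single]
  rw [DDw_Wword _ _ _ _ _ hm hn, DDw_Wword _ _ _ _ _ hm hn,
    DDw_Wword _ _ _ _ _ hm hn, DDw_Wword _ _ _ _ _ hm hn]
  rcases Nat.even_or_odd m with he | ho
  · have h2 : m % 2 = 0 := Nat.even_iff.mp he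
    have h3 : (m-1) % 2 = 1 := by omega
    have h4 : (m+1) % 2 = 1 := by omega
    simp only [iter_iC, h2, h3, h4, iC_zero, iC_one, if_true, if_false] at h00 h11 ⊢
    norm_num at h00 h11 ⊢ <;> try rw [h00, h11]
    try abel
  · have h2 : m % 2 = 1 := Nat.odd_iff.mp ho
    have h3 : (m-1) % 2 = 0 := by omega
    have h4 : (m+1) % 2 = 0 := by omega
    simp only [iter_iC, h2, h3, h4, iC_zero, iC_one, if_true, if_false] at h00 h11 ⊢
    norm_num at h00 h11 ⊢ <;> try rw [h00, h11]
    try abel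

lemma DDw_nil_left (α β a' t : ℂ) {n : ℕ} (hn : 1 ≤ n) :
    DDw α β [] a' (Wword t n) = Delta α β a' t • wA (Wword t n) := by
  rw [DDw, Wword_head? _ _ hn]
  simp [hdDelta]

lemma DDw_nil_right (α β a' t : ℂ) {m : ℕ} (hm : 1 ≤ m) :
    DDw α β (Wword t m) a' [] = (-Delta α β a' (iC^[m-1] t)) • wA (Wword t m) := by
  rw [DDw, Wword_getLast? _ _ hm]
  simp [hdDelta]

lemma DDL_zero_left (α β a' : ℂ) {n : ℕ} (hn : 1 ≤ n) :
    DDL α β a' (Uel 0) (Uel n) =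
      (2 * Delta α β a' 0) • wA (Wword 0 n) + (2 * Delta α β a' 1) • wA (Wword 1 n) := by
  simp only [Uel, Wword_zero, map_add, LinearMap.add_apply, DDL_single,
    DDw_nil_left _ _ _ _ hn]
  module

lemma DDL_zero_right (α β a' : ℂ) {m : ℕ} (hm : 1 ≤ m) :
    DDL α β a' (Uel m) (Uel 0) =
      (-(2 * Delta α β a' (iC^[m+1] 0))) • wA (Wword 0 m) +
      (-(2 * Delta α β a' (iC^[m+1] 1))) • wA (Wword 1 m) := by
  have hpar : ∀ t : ℂ, iC^[m-1] t = iC^[m+1] t := fun t => iter_iC_congr (by omega) t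
  simp only [Uel, Wword_zero, map_add, LinearMap.add_apply, DDL_single,
    DDw_nil_right _ _ _ _ hm, hpar]
  module

lemma DDL_zero_zero (α β a' : ℂ) : DDL α β a' (Uel 0) (Uel 0) = 0 := by
  simp only [Uel, Wword_zero, map_add, LinearMap.add_apply, DDL_single, DDw]
  simp [hdDelta]

/-- The telescoping summand. -/
def Gel (α β a : ℂ) (s L : ℕ) (j : ℕ) : AA :=
  Delta α β a (iC^[j+s] 0) • wA (Wword 0 L) + Delta α β a (iC^[j+s] 1) • wA (Wword 1 L)

lemma key_gen (α β a : ℂ) (c m n j s L : ℕ) (hm : 1 ≤ m) (hn : 1 ≤ n) (hmn : m + n = L)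
    (hpar : (c + m) % 2 = (j + s) % 2) :
    DDL α β (iC^[c] a) (Uel m) (Uel n) = Gel α β a s L j - Gel α β a s L (j+1) := by
  rw [DDL_Uel_Uel _ _ _ hm hn, hmn]
  simp only [Delta_iter, ← Function.iterate_add_apply]
  have e1 : ∀ z : ℂ, iC^[c + m] z = iC^[j+s] z := fun z => iter_iC_congr hpar z
  have e2 : ∀ z : ℂ, iC^[c + (m+1)] z = iC^[(j+1)+s] z := fun z => iter_iC_congr (by omega) z
  rw [e1 0, e1 1, e2 0, e2 1]
  simp only [Gel]
  module

lemma key_left (α β a : ℂ) (n L : ℕ) (hn : 1 ≤ n) (hnL : n = L) :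
    DDL α β (iC^[0] a) (Uel 0) (Uel n)
      = Gel α β a 1 L 1 - Gel α β a 1 L 2 + (Delta α β a 0 + Delta α β a 1) • Uel L := by
  rw [Function.iterate_zero_apply, DDL_zero_left _ _ _ hn, hnL]
  simp only [Gel, Uel]
  norm_num [iter_iC, iC_zero, iC_one]
  module

lemma key_right (α β a : ℂ) (c m k L : ℕ) (s : ℕ) (hm : 1 ≤ m) (hmL : m = L) (hk : 1 ≤ k)
    (hpar : (c + m + 1) % 2 = (k + s) % 2) :
    DDL α β (iC^[c] a) (Uel m) (Uel 0)
      = Gel α β a s L (k-1) - Gel α β a s L k - (Delta α β a 0 + Delta α β a 1) • Uel L := by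
  rw [DDL_zero_right _ _ _ hm, hmL]
  simp only [Delta_iter, ← Function.iterate_add_apply]
  have e1 : ∀ z : ℂ, iC^[c + (L+1)] z = iC^[k+s] z := fun z =>
    iter_iC_congr (by omega) z
  rw [e1 0, e1 1]
  simp only [Gel, Uel]
  rcases Nat.even_or_odd (k + s) with he | ho
  · have p1 : (k+s) % 2 = 0 := Nat.even_iff.mp he
    have p2 : (k-1+s) % 2 = 1 := by omega
    norm_num [iter_iC, p1, p2, iC_zero, iC_one]
    module
  · have p1 : (k+s) % 2 = 1 := Nat.odd_iff.mp ho
    have p2 : (k-1+s) % 2 = 0 := by omega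
    norm_num [iter_iC, p1, p2, iC_zero, iC_one]
    module

lemma key_both (α β a : ℂ) (L : ℕ) (hL : L = 0) :
    DDL α β (iC^[0] a) (Uel 0) (Uel 0) = Gel α β a 1 L 1 - Gel α β a 1 L 2 := by
  rw [Function.iterate_zero_apply, DDL_zero_zero]
  simp only [Gel, hL, Wword_zero]
  norm_num [iter_iC, iC_zero, iC_one]
  module

lemma tele {M : Type*} [AddCommGroup M] (f : ℕ → M) (k : ℕ) (hk : 1 ≤ k) :
    ∑ j ∈ Finset.Ico 1 k, (f j - f (j+1)) = f 1 - f k := by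
  rw [Finset.sum_Ico_eq_sum_range]
  have h : ∀ i ∈ Finset.range (k - 1), f (1+i) - f (1+i+1) = f (1+i) - f (1+(i+1)) :=
    fun i _ => by rw [add_assoc]
  rw [Finset.sum_congr rfl h, Finset.sum_range_sub' (fun i => f (1+i)) (k-1)]
  congr 2
  omega

lemma final_eq (α β a : ℂ) (s k L : ℕ) (hs : s ≤ 1) (hk : 2 ≤ k) :
    Gel α β a s L 1 - Gel α β a s L k =
      -((-1 : ℚ) ^ s) •
        (∑ t ∈ Finset.range 2,
          (Delta α β a (t : ℂ) - Delta α β a (iC^[k + 1] (t : ℂ))) • wA (Wword (t : ℂ) L)) := by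
  rw [Finset.sum_range_succ, Finset.sum_range_one]
  push_cast
  simp only [Gel]
  interval_cases s <;> rcases Nat.even_or_odd k with he | ho
  · have p1 : k % 2 = 0 := Nat.even_iff.mp he
    have p2 : (k+1) % 2 = 1 := by omega
    norm_num [iter_iC, p1, p2, iC_zero, iC_one]
    try module
  · have p1 : k % 2 = 1 := Nat.odd_iff.mp ho
    have p2 : (k+1) % 2 = 0 := by omega
    norm_num [iter_iC, p1, p2, iC_zero, iC_one]
    try module
  · have p1 : k % 2 = 0 := Nat.even_iff.mp he
    have p2 : (k+1+1) % 2 = 0 := by omega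
    have p3 : (k+1) % 2 = 1 := by omega
    norm_num [iter_iC, p1, p2, p3, iC_zero, iC_one]
    try module
  · have p1 : k % 2 = 1 := Nat.odd_iff.mp ho
    have p2 : (k+1+1) % 2 = 1 := by omega
    have p3 : (k+1) % 2 = 0 := by omega
    norm_num [iter_iC, p1, p2, p3, iC_zero, iC_one]
    try module


set_option maxHeartbeats 1600000 in
/-- Lemma `Dsum`. -/
theorem DD_sum (S : Finset ℂ) (hS0 : (0 : ℂ) ∈ S) (hS1 : (1 : ℂ) ∈ S)
    (hSι : ∀ x ∈ S, 1 - x ∈ S) (α β : ℂ) (hα : α ∈ S) (hβ : β ∈ S)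
    (a : ℂ) (haS : a ∈ S) (ha0 : a ≠ 0) (ha1 : a ≠ 1)
    (k : ℕ) (hk : 2 ≤ k) (b : Fin k → ℕ) (hb : ∀ i, 1 ≤ b i)
    (s s' : ℕ) (hs : s ≤ 1) (hs' : s' ≤ 1) :
    (∑ j ∈ Finset.Ico 1 k,
        DDL α β (iC^[((List.ofFn b).take j).sum - j] a)
          (Uel (((List.ofFn b).take j).sum - s)) (Uel (((List.ofFn b).drop j).sum - s'))) =
      -((-1 : ℚ) ^ s) •
          (∑ t ∈ Finset.range 2,
            (Delta α β a (t : ℂ) - Delta α β a (iC^[k + 1] (t : ℂ))) •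
              wA (Wword (t : ℂ) ((List.ofFn b).sum - s - s'))) +
        ((if b ⟨0, by omega⟩ = 1 then (1 : ℚ) else 0) * (if s = 1 then (1 : ℚ) else 0) *
            (Delta α β a 0 + Delta α β a 1)) • Uel ((List.ofFn b).sum - s - s') -
        ((if b ⟨k - 1, by omega⟩ = 1 then (1 : ℚ) else 0) * (if s' = 1 then (1 : ℚ) else 0) *
            (Delta α β a 0 + Delta α β a 1)) • Uel ((List.ofFn b).sum - s - s') := by
  classical
  set l := List.ofFn b with hl
  have hlen : l.length = k := by simp [hl]
  set L := l.sum - s - s' with hL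
  clear_value l L
  -- list facts
  have hmem : ∀ x ∈ l, 1 ≤ x := by
    intro x hx
    rw [hl, List.mem_ofFn] at hx
    obtain ⟨i, rfl⟩ := hx
    exact hb i
  have hlen_le : ∀ m : List ℕ, (∀ x ∈ m, 1 ≤ x) → m.length ≤ m.sum := by
    intro m hm
    induction m with
    | nil => simp
    | cons x xs ih =>
      simp only [List.length_cons, List.sum_cons]
      have h1 := hm x (by simp)
      have h2 := ih (fun y hy => hm y (by simp [hy]))
      omega
  have hjB : ∀ j, j ≤ k → j ≤ (l.take j).sum := by
    intro j hj
    have := hlen_le (l.take j) (fun x hx => hmem x (List.mem_of_mem_take hx))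
    rwa [List.length_take, hlen, min_eq_left hj] at this
  have hdropge : ∀ j, k - j ≤ (l.drop j).sum := by
    intro j
    have := hlen_le (l.drop j) (fun x hx => hmem x (List.mem_of_mem_drop hx))
    rwa [List.length_drop, hlen] at this
  have hsplit : ∀ j, (l.take j).sum + (l.drop j).sum = l.sum := by
    intro j
    rw [← List.sum_append, List.take_append_drop]
  have hBsucc : ∀ j, (hj : j < k) → (l.take (j+1)).sum = (l.take j).sum + b ⟨j, hj⟩ := by
    intro j hj
    rw [List.sum_take_succ l j (by omega)]
    congr 1
    simp [hl]
  have hB1 : (l.take 1).sum = b ⟨0, by omega⟩ := by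
    have h := hBsucc 0 (by omega)
    simpa using h
  have hBk1 : (l.drop (k-1)).sum = b ⟨k-1, by omega⟩ := by
    have h := hBsucc (k-1) (by omega)
    have h2 := hsplit (k-1)
    have h3 := hsplit k
    have h4 : l.drop k = [] := by
      apply List.drop_eq_nil_of_le
      omega
    rw [h4] at h3
    simp at h3
    rw [show k - 1 + 1 = k by omega] at h
    omega
  have hm0 : ∀ j, 1 ≤ j → j < k →
      ((l.take j).sum - s = 0 ↔ j = 1 ∧ b ⟨0, by omega⟩ = 1 ∧ s = 1) := by
    intro j hj1 hjk
    have h2 := hjB j (by omega)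
    constructor
    · intro h
      have hj1' : j = 1 := by omega
      subst hj1'
      rw [hB1] at h h2
      have := hb ⟨0, by omega⟩
      omega
    · rintro ⟨rfl, hb0, rfl⟩
      rw [hB1, hb0]
  have hn0 : ∀ j, 1 ≤ j → j < k →
      ((l.drop j).sum - s' = 0 ↔ j = k - 1 ∧ b ⟨k-1, by omega⟩ = 1 ∧ s' = 1) := by
    intro j hj1 hjk
    have h2 := hdropge j
    constructor
    · intro h
      have hj1' : j = k - 1 := by omega
      subst hj1'
      rw [hBk1] at h h2
      have := hb ⟨k-1, by omega⟩
      omega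
    · rintro ⟨rfl, hbk, rfl⟩
      rw [hBk1, hbk]
  have key : ∀ j ∈ Finset.Ico 1 k,
      DDL α β (iC^[(l.take j).sum - j] a)
          (Uel ((l.take j).sum - s)) (Uel ((l.drop j).sum - s'))
        = (Gel α β a s L j - Gel α β a s L (j+1))
          + (if j = 1 ∧ b ⟨0, by omega⟩ = 1 ∧ s = 1
              then (Delta α β a 0 + Delta α β a 1) • Uel L else 0)
          - (if j = k - 1 ∧ b ⟨k-1, by omega⟩ = 1 ∧ s' = 1
              then (Delta α β a 0 + Delta α β a 1) • Uel L else 0) := by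
    intro j hj
    rw [Finset.mem_Ico] at hj
    have hj1 : 1 ≤ j := hj.1
    have hjk : j < k := hj.2
    have hjB' := hjB j (by omega)
    have hdg := hdropge j
    have hsp := hsplit j
    by_cases h1 : (l.take j).sum - s = 0
    · have foo := (hm0 j hj1 hjk).mp h1
      have hje : j = 1 := foo.1
      have hb0 : b ⟨0, by omega⟩ = 1 := foo.2.1
      have hse : s = 1 := foo.2.2
      have hc0 : (l.take j).sum - j = 0 := by subst hje; omega
      have e1 : (if j = 1 ∧ b ⟨0, by omega⟩ = 1 ∧ s = 1
          then (Delta α β a 0 + Delta α β a 1) • Uel L else 0)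
          = (Delta α β a 0 + Delta α β a 1) • Uel L := if_pos ⟨hje, hb0, hse⟩
      have eG1 : Gel α β a s L j = Gel α β a 1 L 1 := by rw [hje, hse]
      have eG2 : Gel α β a s L (j+1) = Gel α β a 1 L 2 := by rw [hje, hse]
      by_cases h2 : (l.drop j).sum - s' = 0
      · -- both degenerate
        have foo' := (hn0 j hj1 hjk).mp h2
        have hL0 : L = 0 := by
          have h5 : (l.drop j).sum ≤ 1 := by omega
          omega
        have e2 : (if j = k - 1 ∧ b ⟨k-1, by omega⟩ = 1 ∧ s' = 1
            then (Delta α β a 0 + Delta α β a 1) • Uel L else 0)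
            = (Delta α β a 0 + Delta α β a 1) • Uel L :=
          if_pos ⟨foo'.1, foo'.2.1, foo'.2.2⟩
        simp only [h1, h2, hc0, e1, e2, key_both α β a L hL0, eG1, eG2]
        abel
      · -- left degenerate only
        have hn1 : 1 ≤ (l.drop j).sum - s' := by omega
        have hnL : (l.drop j).sum - s' = L := by
          have h5 : (l.take j).sum = 1 := by omega
          omega
        have e2 : (if j = k - 1 ∧ b ⟨k-1, by omega⟩ = 1 ∧ s' = 1
            then (Delta α β a 0 + Delta α β a 1) • Uel L else 0) = 0 :=
          if_neg (fun hc => h2 ((hn0 j hj1 hjk).mpr ⟨hc.1, hc.2.1, hc.2.2⟩))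
        simp only [h1, hc0, hnL, e1, e2, key_left α β a L L (hnL ▸ hn1) rfl, eG1, eG2]
        abel
    · by_cases h2 : (l.drop j).sum - s' = 0
      · -- right degenerate only
        have foo := (hn0 j hj1 hjk).mp h2
        have hje : j = k - 1 := foo.1
        have hm1 : 1 ≤ (l.take j).sum - s := by omega
        have hmL : (l.take j).sum - s = L := by
          have h5 : (l.drop j).sum = 1 := by omega
          omega
        have e1 : (if j = 1 ∧ b ⟨0, by omega⟩ = 1 ∧ s = 1
            then (Delta α β a 0 + Delta α β a 1) • Uel L else 0) = 0 :=
          if_neg (fun hc => h1 ((hm0 j hj1 hjk).mpr ⟨hc.1, hc.2.1, hc.2.2⟩))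
        have e2 : (if j = k - 1 ∧ b ⟨k-1, by omega⟩ = 1 ∧ s' = 1
            then (Delta α β a 0 + Delta α β a 1) • Uel L else 0)
            = (Delta α β a 0 + Delta α β a 1) • Uel L :=
          if_pos ⟨foo.1, foo.2.1, foo.2.2⟩
        have eG1 : Gel α β a s L j = Gel α β a s L (k-1) := by rw [hje]
        have eG2 : Gel α β a s L (j+1) = Gel α β a s L k := by
          rw [show j + 1 = k by omega]
        have ekey := key_right α β a ((l.take j).sum - j) ((l.take j).sum - s) k L s
          hm1 hmL (by omega) (by omega)
        simp only [h2, e1, e2, ekey, eG1, eG2]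
        abel
      · -- generic
        have hm1 : 1 ≤ (l.take j).sum - s := by omega
        have hn1 : 1 ≤ (l.drop j).sum - s' := by omega
        have hmn : ((l.take j).sum - s) + ((l.drop j).sum - s') = L := by omega
        have e1 : (if j = 1 ∧ b ⟨0, by omega⟩ = 1 ∧ s = 1
            then (Delta α β a 0 + Delta α β a 1) • Uel L else 0) = 0 :=
          if_neg (fun hc => h1 ((hm0 j hj1 hjk).mpr ⟨hc.1, hc.2.1, hc.2.2⟩))
        have e2 : (if j = k - 1 ∧ b ⟨k-1, by omega⟩ = 1 ∧ s' = 1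
            then (Delta α β a 0 + Delta α β a 1) • Uel L else 0) = 0 :=
          if_neg (fun hc => h2 ((hn0 j hj1 hjk).mpr ⟨hc.1, hc.2.1, hc.2.2⟩))
        have ekey := key_gen α β a ((l.take j).sum - j) ((l.take j).sum - s)
          ((l.drop j).sum - s') j s L hm1 hn1 hmn (by omega)
        simp only [e1, e2, ekey, add_zero, sub_zero]
  have hsum1 : (∑ j ∈ Finset.Ico 1 k,
      if j = 1 ∧ b ⟨0, by omega⟩ = 1 ∧ s = 1
        then (Delta α β a 0 + Delta α β a 1) • Uel L else 0)
      = ((if b ⟨0, by omega⟩ = 1 then (1 : ℚ) else 0) * (if s = 1 then (1 : ℚ) else 0) *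
          (Delta α β a 0 + Delta α β a 1)) • Uel L := by
    by_cases hP : b ⟨0, by omega⟩ = 1 ∧ s = 1
    · simp only [hP.1, hP.2, and_true, if_pos rfl, one_mul, and_self]
      rw [Finset.sum_ite_eq' (Finset.Ico 1 k) 1
        (fun _ => (Delta α β a 0 + Delta α β a 1) • Uel L),
        if_pos (by rw [Finset.mem_Ico]; omega)]
      simp only [if_true, one_mul]
    · refine (Finset.sum_eq_zero fun j hj =>
        if_neg fun hc => hP ⟨hc.2.1, hc.2.2⟩).trans ?_
      refine (not_and_or.mp hP).elim (fun h => ?_) (fun h => ?_) <;>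
        simp only [if_neg h, zero_mul, mul_zero, one_mul, zero_smul]
  have hsum2 : (∑ j ∈ Finset.Ico 1 k,
      if j = k - 1 ∧ b ⟨k-1, by omega⟩ = 1 ∧ s' = 1
        then (Delta α β a 0 + Delta α β a 1) • Uel L else 0)
      = ((if b ⟨k-1, by omega⟩ = 1 then (1 : ℚ) else 0) * (if s' = 1 then (1 : ℚ) else 0) *
          (Delta α β a 0 + Delta α β a 1)) • Uel L := by
    by_cases hP : b ⟨k-1, by omega⟩ = 1 ∧ s' = 1
    · simp only [hP.1, hP.2, and_true, if_pos rfl, one_mul, and_self]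
      rw [Finset.sum_ite_eq' (Finset.Ico 1 k) (k-1)
        (fun _ => (Delta α β a 0 + Delta α β a 1) • Uel L),
        if_pos (by rw [Finset.mem_Ico]; omega)]
      simp only [if_true, one_mul]
    · refine (Finset.sum_eq_zero fun j hj =>
        if_neg fun hc => hP ⟨hc.2.1, hc.2.2⟩).trans ?_
      refine (not_and_or.mp hP).elim (fun h => ?_) (fun h => ?_) <;>
        simp only [if_neg h, zero_mul, mul_zero, one_mul, zero_smul]
  have htele : (∑ j ∈ Finset.Ico 1 k, (Gel α β a s L j - Gel α β a s L (j+1)))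
      = Gel α β a s L 1 - Gel α β a s L k := tele (Gel α β a s L) k (by omega)
  have hfin := final_eq α β a s k L hs hk
  simp only [Finset.sum_congr rfl key, Finset.sum_sub_distrib, Finset.sum_add_distrib,
    hsum1, hsum2, htele, hfin]


end BlockShuffle
end
end

section
/- For any word u ∈ A({0,1}) and a_0 = 0, a_{k+1} = 1, the single-variable multivariable block shuffle against x_1 satisfies: x_1 ◇ (e_0 u e_1) = e_0 (2 D(u) + u ⧢ (e_0 + e_1)) e_1, where D is the derivation with D(e_a) = e_a e_a - e_a e_0 - e_1 e_a and ⧢ is the shuffle product. -/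
noncomputable section
namespace BlockShuffle

/-- The multivariable block shuffle product `◇ : 𝔛 × 𝒜⁺ → 𝒜⁺` on words, defined by the
recursion `x_{b₁}⋯x_{b_m} ◇ e_{a₁}⋯e_{a_n} = Σ_{k=1}^{m} (-1)^{k-1} e_{a₁}
U(b₁+⋯+b_k-1)·ι^{b₁+⋯+b_k-k}(x_{b_{k+1}}⋯x_{b_m} ◇ e_{a₁}⋯e_{a_n}) + Σ_{k=1}^{m} (-1)^k
e_{a₁} U(b₁+⋯+b_k)·ι^{b₁+⋯+b_k-k}(x_{b_{k+1}}⋯x_{b_m} ◇ e_{a₂}⋯e_{a_n}) +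
e_{a₁}(x_{b₁}⋯x_{b_m} ◇ e_{a₂}⋯e_{a_n})`, with `w ◇ (empty word) = 0` and
`x_∅ ◇ w = w`. -/
def mdsh : List ℕ → List ℂ → AA
  | [], [] => 0
  | [], a :: as => wA (a :: as)
  | _ :: _, [] => 0
  | b₁ :: bs, a :: as =>
      (∑ k ∈ Finset.range (b₁ :: bs).length,
        ((-1 : ℚ) ^ k) •
          (wA [a] * Uel (((b₁ :: bs).take (k + 1)).sum - 1) *
            iAs (((b₁ :: bs).take (k + 1)).sum - (k + 1))
              (mdsh ((b₁ :: bs).drop (k + 1)) (a :: as)))) +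
      (∑ k ∈ Finset.range (b₁ :: bs).length,
        ((-1 : ℚ) ^ (k + 1)) •
          (wA [a] * Uel (((b₁ :: bs).take (k + 1)).sum) *
            iAs (((b₁ :: bs).take (k + 1)).sum - (k + 1))
              (mdsh ((b₁ :: bs).drop (k + 1)) as))) +
      wA [a] * mdsh (b₁ :: bs) as
  termination_by u v => u.length + v.length
  decreasing_by all_goals simp [List.length_drop]; all_goals omega


/-- The shuffle product on basis words. -/
def shW : List ℂ → List ℂ → AA
  | [], v => wA v
  | u, [] => wA u
  | a :: u, b :: v => wA [a] * shW u (b :: v) + wA [b] * shW (a :: u) v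
  termination_by u v => u.length + v.length

/-- The derivation `D` with `D(e_a) = e_a e_a - e_a e_0 - e_1 e_a`, on basis words. -/
def Dw : List ℂ → AA
  | [] => 0
  | a :: w => (wA [a, a] - wA [a, 0] - wA [1, a]) * wA w + wA [a] * Dw w


lemma wA_mul (u v : List ℂ) : wA u * wA v = wA (u ++ v) := by
  simp [wA, MonoidAlgebra.single_mul_single]

lemma wA_nil : wA [] = 1 := MonoidAlgebra.one_def.symm

lemma iAs_zero (x : AA) : iAs 0 x = x := by
  have h : ⇑(FreeMonoid.map (iC^[0])) = id := by funext l; simp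
  apply MonoidAlgebra.coeff_injective
  rw [iAs, MonoidAlgebra.coeff_mapDomainLinearMap, h, Finsupp.mapDomain_id]

lemma Uel_zero : Uel 0 = 2 • (1 : AA) := by
  simp [Uel, Wword, wA_nil]; norm_num

lemma Uel_one : Uel 1 = wA [0] + wA [1] := by
  simp [Uel, Wword]

lemma mdsh_one_cons (a : ℂ) (as : List ℂ) :
    mdsh [1] (a :: as) =
      2 • (wA [a, a] * wA as) - wA [a] * (wA [0] + wA [1]) * mdsh [] as
        + wA [a] * mdsh [1] as := by
  rw [mdsh]
  simp only [List.length_cons, List.length_nil, Finset.sum_range_one, List.take,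
    List.sum_cons, List.sum_nil, List.drop]
  norm_num [Uel_zero, Uel_one, iAs_zero]
  have h2 : mdsh [] (a :: as) = wA (a :: as) := by rw [mdsh]
  rw [h2]
  have h3 : wA [a] * wA (a :: as) = wA [a, a] * wA as := by simp [wA_mul]
  noncomm_ring
  rw [← mul_assoc, h3]
  noncomm_ring

lemma mdsh_nil_ne (v : List ℂ) (h : v ≠ []) : mdsh [] v = wA v := by
  cases v with
  | nil => exact absurd rfl h
  | cons a as => rw [mdsh]

lemma mdsh_one_nil : mdsh [1] [] = 0 := by rw [mdsh]

lemma wA_cons (a : ℂ) (l : List ℂ) : wA (a :: l) = wA [a] * wA l := by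
  simp [wA_mul]

lemma wA_cons₂ (a b : ℂ) (l : List ℂ) : wA (a :: b :: l) = wA [a] * wA (b :: l) := by
  simp [wA_mul]

lemma shW_cons (a b : ℂ) (u v : List ℂ) :
    shW (a :: u) (b :: v) = wA [a] * shW u (b :: v) + wA [b] * shW (a :: u) v := by
  rw [shW]

lemma shW_nil_left (v : List ℂ) : shW [] v = wA v := by cases v <;> rw [shW]

lemma shW_nil_right (u : List ℂ) : shW u [] = wA u := by
  cases u with
  | nil => rw [shW]
  | cons a u => rw [shW]; simp

lemma key (u : List ℂ) (hu : ∀ x ∈ u, x = 0 ∨ x = 1) :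
    mdsh [1] (u ++ [1]) =
      (2 • Dw u + shW u [0] + shW u [1]) * wA [1]
        + (wA [1] - wA [0]) * wA u * wA [1] := by
  induction u with
  | nil =>
      simp only [List.nil_append, mdsh_one_cons, mdsh_one_nil, Dw, shW_nil_left, wA_nil]
      have : mdsh [] ([] : List ℂ) = 0 := by rw [mdsh]
      rw [this, wA_cons₂]
      noncomm_ring
  | cons a u ih =>
      have ha := hu a (List.mem_cons_self)
      have ih' := ih (fun x hx => hu x (List.mem_cons_of_mem a hx))
      have h1 : mdsh [1] ((a :: u) ++ [1]) =
          2 • (wA [a, a] * wA (u ++ [1])) - wA [a] * (wA [0] + wA [1]) * wA (u ++ [1])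
            + wA [a] * mdsh [1] (u ++ [1]) := by
        rw [List.cons_append, mdsh_one_cons, mdsh_nil_ne _ (by simp)]
      rw [h1, ih']
      simp only [Dw, shW_cons, shW_nil_left, shW_nil_right]
      rw [show wA (u ++ [1]) = wA u * wA [1] by simp [wA_mul]]
      rw [wA_cons a u]
      simp only [wA_cons₂]
      rcases ha with h | h <;> subst h <;> noncomm_ring

/-- `x₁ ◇ (e₀ u e₁) = e₀ (2 D(u) + u ⧢ (e₀ + e₁)) e₁` for words `u` over `{0, 1}`. -/
theorem mdsh_one (u : List ℂ) (hu : ∀ x ∈ u, x = 0 ∨ x = 1) :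
    mdsh [1] ((0 : ℂ) :: (u ++ [1])) =
      wA [(0 : ℂ)] * (2 • Dw u + shW u [0] + shW u [1]) * wA [(1 : ℂ)] := by
  have h1 : mdsh [1] ((0 : ℂ) :: (u ++ [1])) =
      2 • (wA [0, 0] * wA (u ++ [1])) - wA [0] * (wA [0] + wA [1]) * wA (u ++ [1])
        + wA [0] * mdsh [1] (u ++ [1]) := by
    rw [mdsh_one_cons, mdsh_nil_ne _ (by simp)]
  rw [h1, key u hu]
  rw [show wA (u ++ [1]) = wA u * wA [1] by simp [wA_mul]]
  simp only [wA_cons₂]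
  noncomm_ring


end BlockShuffle
end
end
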